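/- Let f : ℝ^d → ℝ be a real polynomial of degree at most Δ, with Δ ≥ 1, and fix x ∈ ℝ^d. For η ∈ ℝ define the gradient-descent iterates x_1(η) = x and x_{i+1}(η) = x_i(η) − η∇f(x_i(η)). Then for every i ≥ 1, the map η ↦ ‖∇f(x_i(η))‖² (squared Euclidean norm of the gradient at the i-th iterate) is a polynomial in η of degree at most 2Δ^{i−1}. -/

import Mathlib

/-!
Write `c_n = 1 + Δ + ⋯ + Δ^(n-1)`. The coordinates of `∇f` are polynomials of degree at most
`Δ - 1`, so if the coordinates of the iterate `x_{n+1}(η)` are polynomials in `η` of degree at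
most `c_n`, those of `∇f(x_{n+1}(η))` have degree at most `(Δ - 1) c_n ≤ Δ^n`, and those of
`x_{n+2}(η) = x_{n+1}(η) - η ∇f(x_{n+1}(η))` degree at most `1 + (Δ - 1) c_n ≤ c_{n+1}`.
The squared norm of the gradient is the sum of the squares of its coordinates.
-/

/-- Gradient-descent iterates: `gdIter f x η i` is the `(i+1)`-st iterate `x_{i+1}`,
so `gdIter f x η 0 = x₁ = x` and `x_{i+1} = x_i - η ∇f(x_i)`. -/
noncomputable def gdIter {d : ℕ} (f : EuclideanSpace ℝ (Fin d) → ℝ)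
    (x : EuclideanSpace ℝ (Fin d)) (η : ℝ) : ℕ → EuclideanSpace ℝ (Fin d)
  | 0 => x
  | i + 1 => gdIter f x η i - η • gradient f (gdIter f x η i)

/-- `f : ℝ^d → ℝ` is a real polynomial of (total) degree at most `Δ`. -/
def IsPolyDeg {d : ℕ} (Δ : ℕ) (f : EuclideanSpace ℝ (Fin d) → ℝ) : Prop :=
  ∃ P : MvPolynomial (Fin d) ℝ, P.totalDegree ≤ Δ ∧
    ∀ y : EuclideanSpace ℝ (Fin d), f y = MvPolynomial.eval (fun j => y j) P

open scoped Polynomial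
open MvPolynomial

theorem MvPolynomial.totalDegree_pderiv_le {σ R : Type*} [CommSemiring R] (i : σ)
    (p : MvPolynomial σ R) : (pderiv i p).totalDegree ≤ p.totalDegree - 1 := by
  classical
  refine Finset.sup_le fun m hm => ?_
  have hcoeff : coeff (m + Finsupp.single i 1) p ≠ 0 := by
    intro h
    rw [mem_support_iff, coeff_pderiv, h, zero_mul] at hm
    exact hm rfl
  have hdeg := le_totalDegree (mem_support_iff.mpr hcoeff)
  rw [Finsupp.sum_add_index' (fun _ => rfl) (fun _ _ _ => rfl),
    Finsupp.sum_single_index rfl] at hdeg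
  omega

theorem MvPolynomial.polynomial_eval_aeval {σ R : Type*} [CommSemiring R] (Q : σ → R[X])
    (p : MvPolynomial σ R) (η : R) :
    (aeval Q p).eval η = eval (fun j => (Q j).eval η) p := by
  simp [← Polynomial.coe_aeval_eq_eval, comp_aeval_apply]

theorem MvPolynomial.natDegree_aeval_pderiv_le {σ R : Type*} [CommSemiring R] {Δ e : ℕ}
    {p : MvPolynomial σ R} (hp : p.totalDegree ≤ Δ) {Q : σ → R[X]}
    (hQ : ∀ j, (Q j).natDegree ≤ e) (i : σ) :
    (aeval Q (pderiv i p)).natDegree ≤ (Δ - 1) * e :=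
  aeval_natDegree_le _ ((totalDegree_pderiv_le i p).trans (Nat.sub_le_sub_right hp 1)) Q hQ

theorem pred_mul_geom_sum_le_pow (Δ n : ℕ) : (Δ - 1) * ∑ k ∈ Finset.range n, Δ ^ k ≤ Δ ^ n := by
  rcases Nat.eq_zero_or_pos Δ with rfl | hΔ
  · simp
  · rw [mul_comm, geom_sum_mul_of_one_le hΔ]
    exact Nat.sub_le _ _

theorem one_add_pred_mul_geom_sum_le (Δ n : ℕ) :
    1 + (Δ - 1) * ∑ k ∈ Finset.range n, Δ ^ k ≤ ∑ k ∈ Finset.range (n + 1), Δ ^ k := by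
  rw [Finset.sum_range_succ', pow_zero, add_comm 1]
  gcongr
  calc (Δ - 1) * ∑ k ∈ Finset.range n, Δ ^ k ≤ Δ * ∑ k ∈ Finset.range n, Δ ^ k :=
        Nat.mul_le_mul_right _ (Nat.sub_le Δ 1)
    _ = ∑ k ∈ Finset.range n, Δ ^ (k + 1) := by simp only [Finset.mul_sum, pow_succ']

section PolynomialCurve

variable {ι : Type*} [Fintype ι]

noncomputable def polyCurve (Q : ι → ℝ[X]) (η : ℝ) : EuclideanSpace ℝ ι :=
  WithLp.toLp 2 fun j => (Q j).eval η

theorem norm_polyCurve_sq (Q : ι → ℝ[X]) (η : ℝ) :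
    ‖polyCurve Q η‖ ^ 2 = (∑ j, Q j ^ 2).eval η := by
  simp [EuclideanSpace.real_norm_sq_eq, polyCurve, Polynomial.eval_finsetSum]

theorem hasFDerivAt_mvPolynomial_eval (p : MvPolynomial ι ℝ) (y : EuclideanSpace ℝ ι) :
    HasFDerivAt (fun z : EuclideanSpace ℝ ι => eval (fun j => z j) p)
      (∑ j, eval (fun k => y k) (pderiv j p) • EuclideanSpace.proj (𝕜 := ℝ) j) y := by
  classical
  induction p using MvPolynomial.induction_on with
  | C a => simpa using hasFDerivAt_const a y
  | add p q hp hq =>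
    simp only [map_add, add_smul, Finset.sum_add_distrib]
    exact hp.add hq
  | mul_X p j hp =>
    simp only [map_mul, eval_X]
    refine (hp.mul (EuclideanSpace.proj j).hasFDerivAt).congr_fderiv ?_
    ext v
    simp [pderiv_X, Pi.single_apply, add_mul, Finset.sum_add_distrib, Finset.mul_sum, apply_ite,
      mul_assoc]

theorem hasGradientAt_mvPolynomial_eval (p : MvPolynomial ι ℝ) (y : EuclideanSpace ℝ ι) :
    HasGradientAt (fun z : EuclideanSpace ℝ ι => eval (fun j => z j) p)
      (WithLp.toLp 2 fun j => eval (fun k => y k) (pderiv j p)) y := by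
  rw [hasGradientAt_iff_hasFDerivAt]
  refine (hasFDerivAt_mvPolynomial_eval p y).congr_fderiv ?_
  ext v
  simp [PiLp.inner_apply, mul_comm]

theorem gradient_mvPolynomial_eval_polyCurve (p : MvPolynomial ι ℝ) (Q : ι → ℝ[X]) (η : ℝ) :
    gradient (fun z : EuclideanSpace ℝ ι => eval (fun j => z j) p) (polyCurve Q η) =
      polyCurve (fun j => aeval Q (pderiv j p)) η := by
  rw [(hasGradientAt_mvPolynomial_eval p _).gradient]
  simp [polyCurve, polynomial_eval_aeval]

end PolynomialCurve

section GradientDescent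

variable {d : ℕ} (P : MvPolynomial (Fin d) ℝ) (x : EuclideanSpace ℝ (Fin d))

noncomputable def gdIterPoly : ℕ → Fin d → ℝ[X]
  | 0 => fun j => Polynomial.C (x j)
  | n + 1 => fun j => gdIterPoly n j - Polynomial.X * aeval (gdIterPoly n) (pderiv j P)

theorem gdIter_eq_polyCurve (η : ℝ) (n : ℕ) :
    gdIter (fun y => eval (fun j => y j) P) x η n = polyCurve (gdIterPoly P x n) η := by
  induction n with
  | zero => simp [gdIter, gdIterPoly, polyCurve]
  | succ n ih =>
    rw [gdIter, ih, gradient_mvPolynomial_eval_polyCurve]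
    ext j
    simp [gdIterPoly, polyCurve, polynomial_eval_aeval]

theorem natDegree_gdIterPoly_le {Δ : ℕ} (hP : P.totalDegree ≤ Δ) (n : ℕ) (j : Fin d) :
    (gdIterPoly P x n j).natDegree ≤ ∑ k ∈ Finset.range n, Δ ^ k := by
  induction n generalizing j with
  | zero => simp [gdIterPoly]
  | succ n ih =>
    refine (Polynomial.natDegree_sub_le _ _).trans (max_le ?_ ?_)
    · exact (ih j).trans (Finset.sum_le_sum_of_subset (Finset.range_subset_range.mpr n.le_succ))
    · calc (Polynomial.X * aeval (gdIterPoly P x n) (pderiv j P)).natDegree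
          ≤ 1 + (Δ - 1) * ∑ k ∈ Finset.range n, Δ ^ k :=
            Polynomial.natDegree_mul_le.trans (add_le_add Polynomial.natDegree_X_le
              (natDegree_aeval_pderiv_le hP ih j))
        _ ≤ ∑ k ∈ Finset.range (n + 1), Δ ^ k := one_add_pred_mul_geom_sum_le Δ n

end GradientDescent

theorem gd_poly_gradnormsq_polynomial_in_stepsize_general
    {d Δ : ℕ} (f : EuclideanSpace ℝ (Fin d) → ℝ) (hf : IsPolyDeg Δ f)
    (x : EuclideanSpace ℝ (Fin d)) :
    ∀ i : ℕ, 1 ≤ i →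
      ∃ P : Polynomial ℝ, P.natDegree ≤ 2 * Δ ^ (i - 1) ∧
        ∀ η : ℝ, ‖gradient f (gdIter f x η (i - 1))‖ ^ 2 = Polynomial.eval η P := by
  intro i _
  obtain ⟨P, hPdeg, hfP⟩ := hf
  obtain rfl : f = fun y => eval (fun j => y j) P := funext hfP
  set n := i - 1
  set grad : Fin d → ℝ[X] := fun j => aeval (gdIterPoly P x n) (pderiv j P)
  refine ⟨∑ j, grad j ^ 2, ?_, fun η => ?_⟩
  · refine Polynomial.natDegree_sum_le_of_forall_le _ _ fun j _ => ?_
    refine Polynomial.natDegree_pow_le.trans (Nat.mul_le_mul_left 2 ?_)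
    exact (natDegree_aeval_pderiv_le hPdeg (natDegree_gdIterPoly_le P x hPdeg n) j).trans
      (pred_mul_geom_sum_le_pow Δ n)
  · rw [gdIter_eq_polyCurve, gradient_mvPolynomial_eval_polyCurve, norm_polyCurve_sq]

/-- For a polynomial objective `f` of degree at most `Δ`, the squared norm of the gradient
at the `i`-th gradient-descent iterate is a polynomial in the step size `η` of degree at
most `2Δ^(i-1)`, for every `i ≥ 1`. -/
theorem gd_poly_gradnormsq_polynomial_in_stepsize
    {d Δ : ℕ} (hΔ : 1 ≤ Δ) (f : EuclideanSpace ℝ (Fin d) → ℝ) (hf : IsPolyDeg Δ f)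
    (x : EuclideanSpace ℝ (Fin d)) :
    ∀ i : ℕ, 1 ≤ i →
      ∃ P : Polynomial ℝ, P.natDegree ≤ 2 * Δ ^ (i - 1) ∧
        ∀ η : ℝ, ‖gradient f (gdIter f x η (i - 1))‖ ^ 2 = Polynomial.eval η P :=
  gd_poly_gradnormsq_polynomial_in_stepsize_general f hf x
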